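/- arXiv:1705.09991 — 9 statements merged into one kernel-verified Lean document; each statement's English description precedes it below -/
import Mathlib

section
/- For positive integers a and s, the polynomial F_a^{(s)}(q) = Σ_d q^{Σ_i d(i)}, summed over all functions d : {1,...,a-1} → {0,...,s} with sparse support, satisfies F_a^{(s)}(q) = F_{a-1}^{(s)}(q) + q·(1+q+...+q^{s-1})·F_{a-2}^{(s)}(q) for a ≥ 2, with F_0^{(s)}(q) = F_1^{(s)}(q) = 1. -/
/-- Functions `d : {1,...,a-1} → {0,...,s}` with sparse support. -/
def sparseFuns (s a : ℕ) : Finset (Fin (a - 1) → Fin (s + 1)) :=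
  Finset.univ.filter
    (fun d => ∀ i j : Fin (a - 1), 0 < (d i : ℕ) → 0 < (d j : ℕ) → (i : ℕ) + 1 ≠ (j : ℕ))

/-- Graded Fibonacci number `F_a^{(s)}(q) = Σ_d q^{Σ_i d(i)}`. -/
noncomputable def gradedFib (s a : ℕ) : Polynomial ℤ :=
  ∑ d ∈ sparseFuns s a, Polynomial.X ^ (∑ i, (d i : ℕ))

open Finset Polynomial

def SparseP {s n : ℕ} (d : Fin n → Fin (s + 1)) : Prop :=
  ∀ i j : Fin n, 0 < (d i : ℕ) → 0 < (d j : ℕ) → (i : ℕ) + 1 ≠ (j : ℕ)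

lemma mem_sparseFuns {s a : ℕ} {d : Fin (a - 1) → Fin (s + 1)} :
    d ∈ sparseFuns s a ↔ SparseP d := by
  simp [sparseFuns, SparseP]

lemma sparseP_snoc_zero {s n : ℕ} (d : Fin n → Fin (s + 1)) :
    SparseP (Fin.snoc d 0 : Fin (n + 1) → Fin (s + 1)) ↔ SparseP d := by
  constructor
  · intro h i j hi hj
    have := h i.castSucc j.castSucc (by simpa using hi) (by simpa using hj)
    simpa using this
  · intro h i j hi hj
    induction i using Fin.lastCases with
    | last => simp [Fin.snoc_last] at hi
    | cast i =>
      induction j using Fin.lastCases with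
      | last => simp [Fin.snoc_last] at hj
      | cast j =>
        have := h i j (by simpa using hi) (by simpa using hj)
        simpa using this

lemma sparseP_snoc_pos {s n : ℕ} (d : Fin n → Fin (s + 1)) (v : Fin (s + 1)) :
    SparseP (Fin.snoc (Fin.snoc d 0) v : Fin (n + 2) → Fin (s + 1)) ↔ SparseP d := by
  constructor
  · intro h i j hi hj
    have := h i.castSucc.castSucc j.castSucc.castSucc
      (by simpa using hi) (by simpa using hj)
    simpa using this
  · intro h i j hi hj
    induction i using Fin.lastCases with
    | last =>
      intro hc
      have : (j : ℕ) < n + 2 := j.isLt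
      simp [Fin.val_last] at hc
      omega
    | cast i =>
      induction j using Fin.lastCases with
      | last =>
        induction i using Fin.lastCases with
        | last => simp [Fin.snoc_last] at hi
        | cast i =>
          intro hc
          have : (i : ℕ) < n := i.isLt
          simp [Fin.coe_castSucc, Fin.val_last] at hc
          omega
      | cast j =>
        induction i using Fin.lastCases with
        | last => simp [Fin.snoc_last] at hi
        | cast i =>
          induction j using Fin.lastCases with
          | last => simp [Fin.snoc_last] at hj
          | cast j =>
            have := h i j (by simpa using hi) (by simpa using hj)
            simpa using this

lemma sum_snoc_val {s n : ℕ} (d : Fin n → Fin (s + 1)) (v : Fin (s + 1)) :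
    (∑ i : Fin (n + 1), ((Fin.snoc d v : Fin (n + 1) → Fin (s + 1)) i : ℕ))
      = (∑ i, (d i : ℕ)) + (v : ℕ) := by
  rw [Fin.sum_univ_castSucc]
  simp


lemma decomp {s n : ℕ} {d : Fin (n + 2) → Fin (s + 1)} (hd : SparseP d)
    (hlast : d (Fin.last (n + 1)) ≠ 0) :
    0 < (d (Fin.last (n + 1)) : ℕ) ∧ d ((Fin.last n).castSucc) = 0 ∧
      d = Fin.snoc (Fin.snoc (Fin.init (Fin.init d)) (0 : Fin (s + 1)))
        (d (Fin.last (n + 1))) := by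
  have hv : 0 < (d (Fin.last (n + 1)) : ℕ) := by
    rcases Nat.eq_zero_or_pos (d (Fin.last (n + 1)) : ℕ) with h | h
    · exact absurd (Fin.ext (by simpa using h)) hlast
    · exact h
  have hz : d ((Fin.last n).castSucc) = 0 := by
    by_contra hc
    have hc' : 0 < (d ((Fin.last n).castSucc) : ℕ) := by
      rcases Nat.eq_zero_or_pos (d ((Fin.last n).castSucc) : ℕ) with h | h
      · exact absurd (Fin.ext (by simpa using h)) hc
      · exact h
    exact hd ((Fin.last n).castSucc) (Fin.last (n + 1)) hc' hv (by simp)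
  refine ⟨hv, hz, ?_⟩
  funext x
  induction x using Fin.lastCases with
  | last => rw [Fin.snoc_last]
  | cast x =>
    rw [Fin.snoc_castSucc]
    induction x using Fin.lastCases with
    | last => rw [Fin.snoc_last]; exact hz
    | cast x => rw [Fin.snoc_castSucc]; rfl

lemma gradedFib_zero (s : ℕ) : gradedFib s 0 = 1 := by
  haveI : Unique (Fin (0 - 1) → Fin (s + 1)) :=
    (inferInstance : Unique (Fin 0 → Fin (s + 1)))
  rw [gradedFib, show sparseFuns s 0 = Finset.univ from
    Finset.filter_true_of_mem (fun d _ i j hi hj => i.elim0)]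
  rw [Finset.univ_unique, Finset.sum_singleton]
  simp

lemma gradedFib_one (s : ℕ) : gradedFib s 1 = 1 := by
  haveI : Unique (Fin (1 - 1) → Fin (s + 1)) :=
    (inferInstance : Unique (Fin 0 → Fin (s + 1)))
  rw [gradedFib, show sparseFuns s 1 = Finset.univ from
    Finset.filter_true_of_mem (fun d _ i j hi hj => i.elim0)]
  rw [Finset.univ_unique, Finset.sum_singleton]
  simp

lemma gradedFib_two (s : ℕ) :
    gradedFib s 2 = 1 + X * ∑ k ∈ Finset.range s, (X : Polynomial ℤ) ^ k := by
  rw [gradedFib]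
  rw [show sparseFuns s 2 = Finset.univ by
    apply Finset.filter_true_of_mem
    intro d _ i j _ _
    have hi : (i : ℕ) = 0 := by omega
    have hj : (j : ℕ) = 0 := by omega
    omega]
  rw [show (∑ d : Fin (2 - 1) → Fin (s+1), (X : Polynomial ℤ) ^ (∑ i, (d i : ℕ)))
      = ∑ v : Fin (s+1), X ^ (v : ℕ) from
    Fintype.sum_equiv (Equiv.funUnique (Fin 1) (Fin (s+1))) _ _
      (fun d => by simp [Equiv.funUnique])]
  rw [Fin.sum_univ_eq_sum_range (fun k => (X : Polynomial ℤ) ^ k) (s+1)]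
  rw [Finset.sum_range_succ']
  rw [Finset.mul_sum]
  simp [pow_succ, mul_comm, add_comm]

lemma gradedFib_key (s n : ℕ) :
    gradedFib s (n + 3) = gradedFib s (n + 2) +
      X * (∑ k ∈ Finset.range s, X ^ k) * gradedFib s (n + 1) := by
  have hsplit := Finset.sum_filter_add_sum_filter_not (sparseFuns s (n + 3))
    (fun d => d (Fin.last (n + 1)) = 0)
    (fun d => (X : Polynomial ℤ) ^ (∑ i, (d i : ℕ)))
  rw [gradedFib, ← hsplit]
  congr 1
  · -- last coordinate zero : equals gradedFib s (n+2)
    rw [gradedFib]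
    refine Finset.sum_nbij' (fun d => Fin.init d) (fun d => Fin.snoc d (0 : Fin (s+1)))
      ?_ ?_ ?_ ?_ ?_
    · intro d hd
      rw [Finset.mem_filter] at hd
      obtain ⟨hd, hlast⟩ := hd
      rw [mem_sparseFuns] at hd ⊢
      have heq : d = Fin.snoc (Fin.init d) (0 : Fin (s+1)) := by
        rw [← hlast]; exact (Fin.snoc_init_self d).symm
      rw [heq] at hd
      exact (sparseP_snoc_zero _).1 hd
    · intro d hd
      rw [mem_sparseFuns] at hd
      rw [Finset.mem_filter]
      refine ⟨mem_sparseFuns.2 ((sparseP_snoc_zero _).2 hd), by simp⟩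
    · intro d hd
      rw [Finset.mem_filter] at hd
      rw [← hd.2]
      exact Fin.snoc_init_self d
    · intro d _; exact Fin.init_snoc _ _
    · intro d hd
      rw [Finset.mem_filter] at hd
      congr 1
      have heq : d = Fin.snoc (Fin.init d) (0 : Fin (s+1)) := by
        rw [← hd.2]; exact (Fin.snoc_init_self d).symm
      conv_lhs => rw [heq]
      exact (sum_snoc_val (Fin.init d) 0).trans (by simp)
  · -- last coordinate positive
    have hX : X * (∑ k ∈ Finset.range s, (X : Polynomial ℤ) ^ k)
        = ∑ k ∈ Finset.range s, X ^ (k + 1) := by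
      rw [Finset.mul_sum]
      exact Finset.sum_congr rfl fun k _ => (pow_succ' X k).symm
    rw [gradedFib, hX, Finset.sum_mul_sum]
    rw [show (∑ k ∈ Finset.range s, ∑ d ∈ sparseFuns s (n+1),
          (X : Polynomial ℤ) ^ (k+1) * X ^ (∑ i, (d i : ℕ)))
        = ∑ p ∈ (Finset.range s) ×ˢ sparseFuns s (n + 1),
          (X : Polynomial ℤ) ^ (p.1 + 1 + ∑ i, (p.2 i : ℕ)) by
      rw [Finset.sum_product]
      exact Finset.sum_congr rfl fun k _ => Finset.sum_congr rfl fun d _ =>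
        (pow_add X (k+1) _).symm]
    refine Finset.sum_bij'
      (i := fun d _ => (((d (Fin.last (n+1)) : ℕ) - 1 : ℕ), Fin.init (Fin.init d)))
      (j := fun p hp => Fin.snoc (Fin.snoc p.2 (0 : Fin (s+1)))
        (⟨p.1 + 1, by
          have := (Finset.mem_product.1 hp).1
          rw [Finset.mem_range] at this
          omega⟩ : Fin (s+1)))
      ?hi ?hj ?left ?right ?vals
    case hi =>
      intro d hd
      rw [Finset.mem_filter] at hd
      obtain ⟨hd, hlast⟩ := hd
      rw [mem_sparseFuns] at hd
      obtain ⟨hv, hz, hdec⟩ := decomp hd hlast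
      rw [Finset.mem_product, Finset.mem_range, mem_sparseFuns]
      constructor
      · have := (d (Fin.last (n+1))).isLt
        simp only
        omega
      · have hd2 := hd
        rw [hdec] at hd2
        exact (sparseP_snoc_pos _ _).1 hd2
    case hj =>
      intro p hp
      rw [Finset.mem_product, Finset.mem_range, mem_sparseFuns] at hp
      simp only [Finset.mem_filter]
      constructor
      · exact mem_sparseFuns.2 ((sparseP_snoc_pos _ _).2 hp.2)
      · rw [Fin.snoc_last]
        intro hc
        have : p.1 + 1 = 0 := by simpa using congrArg Fin.val hc
        omega
    case left =>
      intro d hd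
      rw [Finset.mem_filter] at hd
      obtain ⟨hd', hlast⟩ := hd
      rw [mem_sparseFuns] at hd'
      obtain ⟨hv, hz, hdec⟩ := decomp hd' hlast
      dsimp only
      funext x
      induction x using Fin.lastCases with
      | last =>
        rw [Fin.snoc_last]
        exact Fin.ext (by simp; omega)
      | cast x =>
        rw [Fin.snoc_castSucc]
        induction x using Fin.lastCases with
        | last => rw [Fin.snoc_last]; exact hz.symm
        | cast x => rw [Fin.snoc_castSucc]; rfl
    case right =>
      intro p hp
      obtain ⟨k, d0⟩ := p
      dsimp only
      rw [Fin.snoc_last, Fin.init_snoc, Fin.init_snoc]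
      simp
    case vals =>
      intro d hd
      rw [Finset.mem_filter] at hd
      obtain ⟨hd', hlast⟩ := hd
      rw [mem_sparseFuns] at hd'
      obtain ⟨hv, hz, hdec⟩ := decomp hd' hlast
      dsimp only
      congr 1
      calc (∑ i, (d i : ℕ))
          = (∑ i, ((Fin.init (Fin.init d)) i : ℕ)) + 0 + (d (Fin.last (n+1)) : ℕ) := by
            conv_lhs => rw [hdec]
            exact (sum_snoc_val (Fin.snoc (Fin.init (Fin.init d)) (0 : Fin (s+1)))
              (d (Fin.last (n+1)))).trans (by rw [sum_snoc_val]; simp)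
        _ = (d (Fin.last (n+1)) : ℕ) - 1 + 1
              + (∑ i, ((Fin.init (Fin.init d)) i : ℕ)) := by omega

/-- The graded Fibonacci numbers satisfy `F_0 = F_1 = 1` and
`F_a = F_{a-1} + q·(1+q+...+q^{s-1})·F_{a-2}` for `a ≥ 2`. -/
theorem gradedFib_recurrence (s : ℕ) (hs : 0 < s) :
    gradedFib s 0 = 1 ∧ gradedFib s 1 = 1 ∧
      ∀ a : ℕ, 2 ≤ a →
        gradedFib s a = gradedFib s (a - 1) +
          Polynomial.X * (∑ k ∈ Finset.range s, Polynomial.X ^ k) * gradedFib s (a - 2) := by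
  refine ⟨gradedFib_zero s, gradedFib_one s, ?_⟩
  intro a ha
  match a, ha with
  | 2, _ =>
    simpa [gradedFib_one, gradedFib_zero, mul_one] using gradedFib_two s
  | (n + 3), _ =>
    simpa using gradedFib_key s n
end

section
/- For positive integers a and s, Σ_d q^{Σ_i d(i)}, summed over functions d : {1,...,a-1} → {0,...,s} with sparse support, equals Σ_{n=0}^{⌊a/2⌋} (q·(1+q+...+q^{s-1}))^n · binomial(a-n, n). -/
open Polynomial Finset

/-- sparseness predicate -/
def SpPred (s m : ℕ) (d : Fin m → Fin (s + 1)) : Prop :=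
  ∀ i j : Fin m, 0 < (d i : ℕ) → 0 < (d j : ℕ) → (i : ℕ) + 1 ≠ (j : ℕ)

instance (s m : ℕ) : DecidablePred (SpPred s m) := fun _ => by
  unfold SpPred; infer_instance

noncomputable def Lp (s m : ℕ) : Polynomial ℤ :=
  ∑ d ∈ Finset.univ.filter (SpPred s m), X ^ (∑ i, (d i : ℕ))

noncomputable def Tq (s : ℕ) : Polynomial ℤ := X * ∑ k ∈ Finset.range s, X ^ k

noncomputable def Rp (s a : ℕ) : Polynomial ℤ :=
  ∑ n ∈ Finset.range (a + 1), Tq s ^ n * C ((a - n).choose n : ℤ)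

lemma sum_snoc {s m : ℕ} (d : Fin m → Fin (s + 1)) (x : Fin (s + 1)) :
    ∑ i : Fin (m + 1), ((Fin.snoc d x : Fin (m + 1) → Fin (s + 1)) i : ℕ)
      = (∑ i : Fin m, (d i : ℕ)) + (x : ℕ) := by
  rw [Fin.sum_univ_castSucc]
  simp

lemma sp_snoc_zero {s m : ℕ} (d : Fin m → Fin (s + 1)) :
    SpPred s (m + 1) (Fin.snoc d 0) ↔ SpPred s m d := by
  constructor
  · intro h i j hi hj
    have := h i.castSucc j.castSucc (by simpa using hi) (by simpa using hj)
    simpa using this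
  · intro h i j hi hj
    rcases Fin.eq_castSucc_or_eq_last i with ⟨i', rfl⟩ | rfl
    · rcases Fin.eq_castSucc_or_eq_last j with ⟨j', rfl⟩ | rfl
      · have := h i' j' (by simpa using hi) (by simpa using hj)
        simpa using this
      · simp at hj
    · simp at hi

lemma sp_snoc_pos {s m : ℕ} (d : Fin (m + 1) → Fin (s + 1)) (x : Fin (s + 1))
    (hx : 0 < (x : ℕ)) :
    SpPred s (m + 2) (Fin.snoc d x) ↔ SpPred s (m + 1) d ∧ (d (Fin.last m) : ℕ) = 0 := by
  constructor
  · intro h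
    constructor
    · intro i j hi hj
      have := h i.castSucc j.castSucc (by simpa using hi) (by simpa using hj)
      simpa using this
    · by_contra hne
      have hd : 0 < (d (Fin.last m) : ℕ) := Nat.pos_of_ne_zero hne
      have := h (Fin.castSucc (Fin.last m)) (Fin.last (m + 1))
        (by simpa using hd) (by simpa using hx)
      simp at this
  · rintro ⟨h, hl⟩ i j hi hj
    rcases Fin.eq_castSucc_or_eq_last i with ⟨i', rfl⟩ | rfl
    · rcases Fin.eq_castSucc_or_eq_last j with ⟨j', rfl⟩ | rfl
      · have := h i' j' (by simpa using hi) (by simpa using hj)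
        simpa using this
      · -- j = last, need (i' : ℕ) + 1 ≠ m + 1
        simp only [Fin.coe_castSucc, Fin.val_last]
        intro hc
        have hi'l : i' = Fin.last m := Fin.ext (by simp only [Fin.val_last]; omega)
        rw [Fin.snoc_castSucc, hi'l] at hi
        omega
    · rcases Fin.eq_castSucc_or_eq_last j with ⟨j', rfl⟩ | rfl
      · have := j'.isLt
        simp only [Fin.coe_castSucc, Fin.val_last]
        omega
      · simp

lemma Lp_filter (s m : ℕ) :
    Lp s m = ∑ d : Fin m → Fin (s + 1),
      if SpPred s m d then (X : Polynomial ℤ) ^ (∑ i, (d i : ℕ)) else 0 :=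
  Finset.sum_filter _ _

lemma Lp_rec (s m : ℕ) :
    Lp s (m + 2) = Lp s (m + 1) + Tq s * Lp s m := by
  have hbij : Function.Bijective
      (fun p : Fin (s + 1) × (Fin (m + 1) → Fin (s + 1)) => (Fin.snoc p.2 p.1 : Fin (m + 2) → Fin (s + 1))) :=
    (Fin.snocEquiv (fun _ : Fin (m + 2) => Fin (s + 1))).bijective
  rw [Lp_filter]
  rw [← Fintype.sum_bijective _ hbij
      (fun p : Fin (s + 1) × (Fin (m + 1) → Fin (s + 1)) =>
        if SpPred s (m + 2) (Fin.snoc p.2 p.1) then (X : Polynomial ℤ) ^ (∑ i, ((Fin.snoc p.2 p.1 : Fin (m + 2) → Fin (s + 1)) i : ℕ)) else 0)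
      _ (fun p => rfl)]
  rw [Fintype.sum_prod_type, Fin.sum_univ_succ]
  have h0 : (∑ d : Fin (m + 1) → Fin (s + 1),
      if SpPred s (m + 2) (Fin.snoc d (0 : Fin (s+1))) then (X : Polynomial ℤ) ^ (∑ i, ((Fin.snoc d (0 : Fin (s+1)) : Fin (m + 2) → Fin (s + 1)) i : ℕ)) else 0)
      = Lp s (m + 1) := by
    rw [Lp_filter]
    refine Finset.sum_congr rfl fun d _ => ?_
    rw [sum_snoc]
    simp only [Fin.val_zero, add_zero]
    exact if_congr (sp_snoc_zero d) rfl rfl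
  rw [h0]
  congr 1
  -- the positive-value part
  have h1 : ∀ k : Fin s, (∑ d : Fin (m + 1) → Fin (s + 1),
      if SpPred s (m + 2) (Fin.snoc d k.succ) then (X : Polynomial ℤ) ^ (∑ i, ((Fin.snoc d k.succ : Fin (m + 2) → Fin (s + 1)) i : ℕ)) else 0)
      = X ^ ((k : ℕ) + 1) * Lp s m := by
    intro k
    have hk : 0 < ((k.succ : Fin (s + 1)) : ℕ) := by simp
    have step1 : ∀ d : Fin (m + 1) → Fin (s + 1),
        (if SpPred s (m + 2) (Fin.snoc d k.succ) then (X : Polynomial ℤ) ^ (∑ i, ((Fin.snoc d k.succ : Fin (m + 2) → Fin (s + 1)) i : ℕ)) else 0)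
        = if SpPred s (m + 1) d ∧ (d (Fin.last m) : ℕ) = 0 then X ^ ((∑ i, (d i : ℕ)) + ((k : ℕ) + 1)) else 0 := by
      intro d
      rw [sum_snoc]
      have : ((k.succ : Fin (s + 1)) : ℕ) = (k : ℕ) + 1 := by simp
      rw [this]
      exact if_congr (sp_snoc_pos d k.succ hk) rfl rfl
    simp only [step1]
    -- now reindex the sum over d via snoc again
    have hbij2 : Function.Bijective
        (fun p : Fin (s + 1) × (Fin m → Fin (s + 1)) => (Fin.snoc p.2 p.1 : Fin (m + 1) → Fin (s + 1))) :=
      (Fin.snocEquiv (fun _ : Fin (m + 1) => Fin (s + 1))).bijective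
    rw [← Fintype.sum_bijective _ hbij2
        (fun p : Fin (s + 1) × (Fin m → Fin (s + 1)) =>
          if SpPred s (m + 1) (Fin.snoc p.2 p.1) ∧ (((Fin.snoc p.2 p.1 : Fin (m + 1) → Fin (s + 1)) (Fin.last m)) : ℕ) = 0
          then (X : Polynomial ℤ) ^ ((∑ i, ((Fin.snoc p.2 p.1 : Fin (m + 1) → Fin (s + 1)) i : ℕ)) + ((k : ℕ) + 1)) else 0)
        _ (fun p => rfl)]
    rw [Fintype.sum_prod_type, Fin.sum_univ_succ]
    have hz : (∑ d : Fin m → Fin (s + 1),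
        if SpPred s (m + 1) (Fin.snoc d (0 : Fin (s+1))) ∧ (((Fin.snoc d (0 : Fin (s+1)) : Fin (m + 1) → Fin (s + 1)) (Fin.last m)) : ℕ) = 0
        then (X : Polynomial ℤ) ^ ((∑ i, ((Fin.snoc d (0 : Fin (s+1)) : Fin (m + 1) → Fin (s + 1)) i : ℕ)) + ((k : ℕ) + 1)) else 0)
        = X ^ ((k : ℕ) + 1) * Lp s m := by
      rw [Lp_filter, Finset.mul_sum]
      refine Finset.sum_congr rfl fun d _ => ?_
      rw [sum_snoc]
      by_cases h : SpPred s m d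
      · rw [if_pos ⟨(sp_snoc_zero d).2 h, by simp⟩, if_pos h]
        simp only [Fin.val_zero, add_zero, pow_add]
        ring
      · rw [if_neg (fun hc => h ((sp_snoc_zero d).1 hc.1)), if_neg h, mul_zero]
    rw [hz, Finset.sum_eq_zero (fun y _ => ?_), add_zero]
    refine Finset.sum_eq_zero fun d _ => ?_
    rw [if_neg]
    rintro ⟨-, hc⟩
    simp at hc
  rw [Finset.sum_congr rfl (fun k _ => h1 k), ← Finset.sum_mul]
  congr 1
  rw [Fin.sum_univ_eq_sum_range (fun k => (X : Polynomial ℤ) ^ (k + 1)) s, Tq, Finset.mul_sum]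
  exact Finset.sum_congr rfl fun k _ => by rw [pow_succ, mul_comm]


lemma Lp_zero (s : ℕ) : Lp s 0 = 1 := by
  rw [Lp_filter]
  have h1 : ∀ d : Fin 0 → Fin (s + 1),
      (if SpPred s 0 d then (X : Polynomial ℤ) ^ (∑ i, (d i : ℕ)) else 0) = 1 := by
    intro d
    have hd : SpPred s 0 d := fun i => i.elim0
    rw [if_pos hd]
    simp
  rw [Finset.sum_congr rfl fun d _ => h1 d]
  simp

lemma Lp_one (s : ℕ) : Lp s 1 = 1 + Tq s := by
  rw [Lp_filter]
  have h1 : ∀ d : Fin 1 → Fin (s + 1),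
      (if SpPred s 1 d then (X : Polynomial ℤ) ^ (∑ i, (d i : ℕ)) else 0) = X ^ ((d 0 : ℕ)) := by
    intro d
    have hd : SpPred s 1 d := by intro i j _ _; omega
    rw [if_pos hd, Fin.sum_univ_one]
  rw [Finset.sum_congr rfl fun d _ => h1 d]
  have hbij : Function.Bijective (fun x : Fin (s + 1) => (fun _ : Fin 1 => x)) :=
    (Equiv.funUnique (Fin 1) (Fin (s + 1))).symm.bijective
  rw [← Fintype.sum_bijective _ hbij
      (fun x : Fin (s + 1) => (X : Polynomial ℤ) ^ (x : ℕ)) _ (fun x => rfl)]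
  rw [Fin.sum_univ_eq_sum_range (fun k => (X : Polynomial ℤ) ^ k) (s + 1)]
  rw [Finset.sum_range_succ' (fun k => (X : Polynomial ℤ) ^ k) s]
  rw [Tq, Finset.mul_sum, pow_zero, add_comm]
  congr 1
  exact Finset.sum_congr rfl fun k _ => by rw [pow_succ, mul_comm]

lemma Rp_one (s : ℕ) : Rp s 1 = 1 := by
  norm_num [Rp, Finset.sum_range_succ]

lemma Rp_two (s : ℕ) : Rp s 2 = 1 + Tq s := by
  norm_num [Rp, Finset.sum_range_succ]

lemma Rp_rec (s a : ℕ) : Rp s (a + 2) = Rp s (a + 1) + Tq s * Rp s a := by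
  have hB : Rp s (a + 1)
      = (∑ n ∈ Finset.range (a + 1), Tq s ^ (n + 1) * C (((a - n).choose (n + 1) : ℤ))) + 1 := by
    rw [Rp, Finset.sum_range_succ' _ (a + 1)]
    rw [Finset.sum_congr rfl (fun i (hi : i ∈ Finset.range (a + 1)) => by
      rw [show a + 1 - (i + 1) = a - i by omega])]
    norm_num
  have hA : Rp s (a + 2)
      = (∑ n ∈ Finset.range (a + 1), Tq s ^ (n + 1) * C (((a - n).choose (n + 1) : ℤ)))
        + Tq s * Rp s a + 1 := by
    rw [Rp, Finset.sum_range_succ' _ (a + 2)]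
    rw [Finset.sum_congr rfl (fun i (hi : i ∈ Finset.range (a + 2)) => by
      rw [show a + 2 - (i + 1) = a + 1 - i by omega])]
    rw [Finset.sum_range_succ _ (a + 1)]
    have h0 : Tq s ^ (a + 1 + 1) * C (((a + 1 - (a + 1)).choose (a + 1 + 1) : ℤ)) = 0 := by
      rw [Nat.sub_self, Nat.choose_eq_zero_of_lt (by omega)]
      simp
    rw [h0, add_zero]
    have key : ∀ n ∈ Finset.range (a + 1),
        Tq s ^ (n + 1) * C (((a + 1 - n).choose (n + 1) : ℤ))
        = Tq s ^ (n + 1) * C (((a - n).choose (n + 1) : ℤ))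
          + Tq s * (Tq s ^ n * C (((a - n).choose n : ℤ))) := by
      intro n hn
      simp only [Finset.mem_range] at hn
      rw [show a + 1 - n = (a - n) + 1 by omega, Nat.choose_succ_succ]
      push_cast
      rw [C_add, mul_add]
      ring
    rw [Finset.sum_congr rfl key, Finset.sum_add_distrib, ← Finset.mul_sum, ← Rp]
    norm_num
  rw [hA, hB]
  ring

lemma Lp_eq_Rp (s : ℕ) : ∀ m, Lp s m = Rp s (m + 1) := by
  intro m
  induction m using Nat.strong_induction_on with
  | _ m ih =>
    match m, ih with
    | 0, _ => rw [Lp_zero, Rp_one]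
    | 1, _ => rw [Lp_one, Rp_two]
    | (k + 2), ih =>
      have h := Rp_rec s (k + 1)
      rw [show k + 1 + 2 = k + 2 + 1 by omega, show k + 1 + 1 = k + 2 by omega] at h
      rw [Lp_rec, ih (k + 1) (by omega), ih k (by omega),
        show k + 1 + 1 = k + 2 by omega, h]

theorem gradedFib_closed_form' (s a : ℕ) (hs : 0 < s) (ha : 0 < a) :
    (∑ d ∈ (Finset.univ.filter (SpPred s (a-1))), (Polynomial.X : Polynomial ℤ) ^ (∑ i, (d i : ℕ))) =
      ∑ n ∈ Finset.range (a / 2 + 1),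
        (Polynomial.X * ∑ k ∈ Finset.range s, Polynomial.X ^ k) ^ n *
          Polynomial.C ((Nat.choose (a - n) n : ℤ)) := by
  rw [← Lp, Lp_eq_Rp, show a - 1 + 1 = a by omega, Rp]
  simp only [Tq]
  symm
  apply Finset.sum_subset
  · intro n hn
    simp only [Finset.mem_range] at hn ⊢
    omega
  · intro n hn hns
    simp only [Finset.mem_range] at hn hns
    rw [Nat.choose_eq_zero_of_lt (by omega)]
    simp


/-- `Σ_d q^{Σ_i d(i)} = Σ_{n=0}^{⌊a/2⌋} (q (1+q+...+q^{s-1}))^n C(a-n, n)`. -/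
theorem gradedFib_closed_form (s a : ℕ) (hs : 0 < s) (ha : 0 < a) :
    (∑ d ∈ sparseFuns s a, (Polynomial.X : Polynomial ℤ) ^ (∑ i, (d i : ℕ))) =
      ∑ n ∈ Finset.range (a / 2 + 1),
        (Polynomial.X * ∑ k ∈ Finset.range s, Polynomial.X ^ k) ^ n *
          Polynomial.C ((Nat.choose (a - n) n : ℤ)) := by
  have heq : sparseFuns s a = Finset.univ.filter (SpPred s (a - 1)) := by
    ext d
    simp [sparseFuns, SpPred]
  rw [heq]
  exact gradedFib_closed_form' s a hs ha
end

section
/- For every integer k ≥ 1, binomial(2k, k+1) + Σ_{i,j ≥ 0} binomial(i+j, i)·binomial(2k-2-(i+j), k+1) = 2^{2k-2}, where binomial(m, r) = 0 when r > m or m < 0. -/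
open Finset

/-- Pascal-type recurrence for partial row sums. -/
lemma aux_sum_pascal (m r : ℕ) :
    (∑ s ∈ range (r + 1), (m + 1 + 1).choose s) + (m + 1).choose r
      = 2 * ∑ s ∈ range (r + 1), (m + 1).choose s := by
  induction r with
  | zero => simp
  | succ r ih =>
    rw [sum_range_succ, sum_range_succ (f := fun s => (m + 1).choose s)]
    have hp : (m + 1 + 1).choose (r + 1) = (m + 1).choose r + (m + 1).choose (r + 1) :=
      Nat.choose_succ_succ (m + 1) r
    omega

/-- Key identity: `∑_{t ≤ m} 2^{m-t} C(t,r) + ∑_{s ≤ r} C(m+1,s) = 2^{m+1}`. -/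
lemma aux_key (m r : ℕ) :
    (∑ t ∈ range (m + 1), 2 ^ (m - t) * t.choose r)
      + ∑ s ∈ range (r + 1), (m + 1).choose s = 2 ^ (m + 1) := by
  induction m with
  | zero =>
    cases r with
    | zero => simp
    | succ r =>
      have h2 : ∑ s ∈ range (r + 1 + 1), Nat.choose 1 s = 2 := by
        have h := Nat.sum_range_choose 1
        calc ∑ s ∈ range (r + 1 + 1), Nat.choose 1 s
            = ∑ s ∈ range 2, Nat.choose 1 s := by
              symm
              apply Finset.sum_subset
              · intro t ht
                rw [mem_range] at *
                omega
              · intro t ht ht'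
                rw [mem_range] at ht ht'
                exact Nat.choose_eq_zero_of_lt (by omega)
          _ = 2 := by simpa using h
      simp [h2, Finset.sum_range_one]
  | succ m ih =>
    rw [sum_range_succ]
    have h1 : ∑ t ∈ range (m + 1), 2 ^ (m + 1 - t) * t.choose r
        = 2 * ∑ t ∈ range (m + 1), 2 ^ (m - t) * t.choose r := by
      rw [mul_sum]
      refine sum_congr rfl fun t ht => ?_
      rw [mem_range] at ht
      have e : m + 1 - t = (m - t) + 1 := by omega
      rw [e, pow_succ]; ring
    have h2 := aux_sum_pascal m r
    have h3 : (2:ℕ) ^ (m + 1 + 1) = 2 * 2 ^ (m + 1) := by ring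
    have h4 : 2 ^ (m + 1 - (m + 1)) = 1 := by simp
    rw [h1, h4]
    omega

/-- `C(2k, k+1) + Σ_{i,j ≥ 0} C(i+j, i) C(2k-2-(i+j), k+1) = 2^{2k-2}`,
where out-of-range binomial coefficients vanish. -/
theorem count_C_symmetric_paths (k : ℕ) (hk : 1 ≤ k) :
    Nat.choose (2 * k) (k + 1) +
      (∑ᶠ (i : ℕ) (j : ℕ), Nat.choose (i + j) i * Nat.choose (2 * k - 2 - (i + j)) (k + 1)) =
      2 ^ (2 * k - 2) := by
  -- the second binomial factor vanishes as soon as i+j ≥ k-2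
  have hz : ∀ n : ℕ, k - 2 ≤ n → (2 * k - 2 - n).choose (k + 1) = 0 := by
    intro n hn
    exact Nat.choose_eq_zero_of_lt (by omega)
  set g : ℕ → ℕ → ℕ := fun i j => (i + j).choose i * (2 * k - 2 - (i + j)).choose (k + 1) with hg
  -- reduce the double finsum to a double finite sum
  have hinner : ∀ i : ℕ, (∑ᶠ j : ℕ, g i j) = ∑ j ∈ range (2 * k), g i j := by
    intro i
    apply finsum_eq_sum_of_support_subset
    intro j hj
    simp only [Function.mem_support, hg] at hj
    simp only [coe_range, Set.mem_Iio]
    by_contra hjk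
    push_neg at hjk
    exact hj (by rw [hz (i + j) (by omega)]; ring)
  have houter : (∑ᶠ (i : ℕ) (j : ℕ), g i j)
      = ∑ i ∈ range (2 * k), ∑ j ∈ range (2 * k), g i j := by
    rw [finsum_congr hinner]
    apply finsum_eq_sum_of_support_subset
    intro i hi
    simp only [Function.mem_support] at hi
    simp only [coe_range, Set.mem_Iio]
    by_contra hik
    push_neg at hik
    apply hi
    apply Finset.sum_eq_zero
    intro j _
    simp only [hg]
    rw [hz (i + j) (by omega)]; ring
  -- rewrite each inner row sum as a sum over n = i + j
  have hrow : ∀ i ∈ range (2 * k), (∑ j ∈ range (2 * k), g i j)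
      = ∑ n ∈ range (4 * k), n.choose i * (2 * k - 2 - n).choose (k + 1) := by
    intro i hi
    rw [mem_range] at hi
    have e1 : (∑ n ∈ Finset.Ico i (i + 2 * k), n.choose i * (2 * k - 2 - n).choose (k + 1))
        = ∑ j ∈ range (2 * k), g i j := by
      rw [Finset.sum_Ico_eq_sum_range]
      simp only [add_tsub_cancel_left, hg]
    rw [← e1]
    apply Finset.sum_subset
    · intro n hn
      rw [Finset.mem_Ico] at hn
      rw [mem_range]
      omega
    · intro n hn hn'
      rw [mem_range] at hn
      rw [Finset.mem_Ico] at hn'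
      push_neg at hn'
      by_cases hni : n < i
      · rw [Nat.choose_eq_zero_of_lt hni]; ring
      · rw [hz n (by omega)]; ring
  -- swap summation order and sum the binomial coefficients in each column
  have hswap : (∑ i ∈ range (2 * k), ∑ j ∈ range (2 * k), g i j)
      = ∑ n ∈ range (4 * k), 2 ^ n * (2 * k - 2 - n).choose (k + 1) := by
    rw [Finset.sum_congr rfl hrow, Finset.sum_comm]
    refine sum_congr rfl fun n hn => ?_
    rw [mem_range] at hn
    by_cases hnk : k - 2 ≤ n
    · rw [hz n hnk]
      simp
    · push_neg at hnk
      rw [← Finset.sum_mul]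
      congr 1
      rw [← Nat.sum_range_choose n]
      symm
      apply Finset.sum_subset
      · intro t ht; rw [mem_range] at *; omega
      · intro t ht ht'
        rw [mem_range] at ht ht'
        exact Nat.choose_eq_zero_of_lt (by omega)
  -- restrict to n ≤ 2k-2
  have hrestrict : (∑ n ∈ range (4 * k), 2 ^ n * (2 * k - 2 - n).choose (k + 1))
      = ∑ n ∈ range (2 * k - 1), 2 ^ n * (2 * k - 2 - n).choose (k + 1) := by
    symm
    apply Finset.sum_subset
    · intro n hn; rw [mem_range] at *; omega
    · intro n hn hn'
      rw [mem_range] at hn hn'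
      rw [hz n (by omega)]; ring
  -- reflect the sum
  have hreflect : (∑ n ∈ range (2 * k - 1), 2 ^ n * (2 * k - 2 - n).choose (k + 1))
      = ∑ t ∈ range (2 * k - 1), 2 ^ (2 * k - 2 - t) * t.choose (k + 1) := by
    rw [← Finset.sum_range_reflect (fun t => 2 ^ (2 * k - 2 - t) * t.choose (k + 1)) (2 * k - 1)]
    refine sum_congr rfl fun j hj => ?_
    rw [mem_range] at hj
    have e1 : 2 * k - 1 - 1 - j = 2 * k - 2 - j := by omega
    have e2 : 2 * k - 2 - (2 * k - 2 - j) = j := by omega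
    simp only [e1, e2]
  -- the key identity with m = 2k-2, r = k+1
  have hkey := aux_key (2 * k - 2) (k + 1)
  have e3 : 2 * k - 2 + 1 = 2 * k - 1 := by omega
  rw [e3] at hkey
  -- evaluate the partial row sum of binomial coefficients
  have hhalf := Nat.sum_range_choose_halfway (k - 1)
  have e4 : k - 1 + 1 = k := by omega
  have e5 : 2 * (k - 1) + 1 = 2 * k - 1 := by omega
  have e6 : (4:ℕ) ^ (k - 1) = 2 ^ (2 * k - 2) := by
    rw [show (4:ℕ) = 2 ^ 2 from rfl, ← pow_mul]
    congr 1
    omega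
  rw [e4, e5, e6] at hhalf
  have hsplit : (∑ s ∈ range (k + 1 + 1), (2 * k - 1).choose s)
      = (∑ s ∈ range k, (2 * k - 1).choose s)
        + (2 * k - 1).choose k + (2 * k - 1).choose (k + 1) := by
    rw [sum_range_succ, sum_range_succ]
  have hpascal : (2 * k).choose (k + 1) = (2 * k - 1).choose k + (2 * k - 1).choose (k + 1) := by
    convert Nat.choose_succ_succ (2 * k - 1) k using 2
    omega
  have hpow : (2:ℕ) ^ (2 * k - 1) = 2 * 2 ^ (2 * k - 2) := by
    rw [show 2 * k - 1 = (2 * k - 2) + 1 by omega, pow_succ]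
    ring
  rw [houter, hswap, hrestrict, hreflect]
  omega
end

section
/- For every positive integer a, max_{0 ≤ n ≤ ⌊a/2⌋} ⌊n(2a+1-3n)/2⌋ = ⌊(1/3)·binomial(a+1,2)⌋ = ⌊a(a+1)/6⌋. -/
/-- `max_{0 ≤ 2n ≤ a} ⌊n(2a+1-3n)/2⌋ = ⌊a(a+1)/6⌋`. -/
theorem max_size_core (a : ℕ) (ha : 1 ≤ a) :
    (Finset.range (a / 2 + 1)).sup (fun n => n * (2 * a + 1 - 3 * n) / 2) =
      a * (a + 1) / 6 := by
  apply le_antisymm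
  · apply Finset.sup_le
    intro n hn
    rw [Finset.mem_range] at hn
    rw [Nat.le_div_iff_mul_le (by norm_num)]
    have h3 : 3 * n ≤ 2 * a + 1 := by omega
    have hd : n * (2 * a + 1 - 3 * n) / 2 * 6 ≤ 3 * (n * (2 * a + 1 - 3 * n)) := by
      have := Nat.div_mul_le_self (n * (2 * a + 1 - 3 * n)) 2
      omega
    refine hd.trans ?_
    have hne : (6 * (n : ℤ) - 2 * a - 1) ≠ 0 := by omega
    have hsq : 1 ≤ (6 * (n : ℤ) - 2 * a - 1) ^ 2 := by
      rcases lt_or_gt_of_ne hne with h | h <;> nlinarith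
    zify [h3]
    nlinarith [hsq]
  · obtain ⟨q, r, hr6, rfl⟩ : ∃ q r, r < 6 ∧ a = 6 * q + r :=
      ⟨a / 6, a % 6, by omega, by omega⟩
    interval_cases r
    · refine le_trans ?_ (Finset.le_sup (b := 2 * q) (Finset.mem_range.mpr (by omega)))
      have e1 : 2 * (6 * q + 0) + 1 - 3 * (2 * q) = 6 * q + 1 := by omega
      rw [e1, show (6 * q + 0) * (6 * q + 0 + 1) = 6 * (q * (6 * q + 1)) by ring,
        show 2 * q * (6 * q + 1) = 2 * (q * (6 * q + 1)) by ring]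
      omega
    · refine le_trans ?_ (Finset.le_sup (b := 2 * q) (Finset.mem_range.mpr (by omega)))
      have e1 : 2 * (6 * q + 1) + 1 - 3 * (2 * q) = 6 * q + 3 := by omega
      rw [e1, show (6 * q + 1) * (6 * q + 1 + 1) = 6 * (q * (6 * q + 3)) + 2 by ring,
        show 2 * q * (6 * q + 3) = 2 * (q * (6 * q + 3)) by ring]
      omega
    · refine le_trans ?_ (Finset.le_sup (b := 2 * q + 1) (Finset.mem_range.mpr (by omega)))
      have e1 : 2 * (6 * q + 2) + 1 - 3 * (2 * q + 1) = 6 * q + 2 := by omega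
      rw [e1, show (6 * q + 2) * (6 * q + 2 + 1) = 6 * ((2 * q + 1) * (3 * q + 1)) by ring,
        show (2 * q + 1) * (6 * q + 2) = 2 * ((2 * q + 1) * (3 * q + 1)) by ring]
      omega
    · refine le_trans ?_ (Finset.le_sup (b := 2 * q + 1) (Finset.mem_range.mpr (by omega)))
      have e1 : 2 * (6 * q + 3) + 1 - 3 * (2 * q + 1) = 6 * q + 4 := by omega
      rw [e1, show (6 * q + 3) * (6 * q + 3 + 1) = 6 * ((2 * q + 1) * (3 * q + 2)) by ring,
        show (2 * q + 1) * (6 * q + 4) = 2 * ((2 * q + 1) * (3 * q + 2)) by ring]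
      omega
    · refine le_trans ?_ (Finset.le_sup (b := 2 * q + 1) (Finset.mem_range.mpr (by omega)))
      have e1 : 2 * (6 * q + 4) + 1 - 3 * (2 * q + 1) = 6 * q + 6 := by omega
      rw [e1, show (6 * q + 4) * (6 * q + 4 + 1) = 6 * ((2 * q + 1) * (3 * q + 3)) + 2 by ring,
        show (2 * q + 1) * (6 * q + 6) = 2 * ((2 * q + 1) * (3 * q + 3)) by ring]
      omega
    · refine le_trans ?_ (Finset.le_sup (b := 2 * q + 2) (Finset.mem_range.mpr (by omega)))
      have e1 : 2 * (6 * q + 5) + 1 - 3 * (2 * q + 2) = 6 * q + 5 := by omega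
      rw [e1, show (6 * q + 5) * (6 * q + 5 + 1) = 6 * ((q + 1) * (6 * q + 5)) by ring,
        show (2 * q + 2) * (6 * q + 5) = 2 * ((q + 1) * (6 * q + 5)) by ring]
      omega
end

section
/- Define polynomials F_a(q) by F_0 = F_1 = 1 and F_a(q) = F_{a-1}(q) + q·F_{a-2}(q). Let Φ_a = (a/2)·F_a'(1) − (1/2)·F_a''(1) (derivatives in q). Then Σ_{a≥0} Φ_a x^{a+1} = x^3/(1-x-x^2)^3 as formal power series. -/
/-!
Summing the recurrence against `x^a` gives `Σ F_a(q) x^a = 1/(1 - x - q x²)`. Differentiating in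
`q` at `q = 1`, with `D = 1 - x - x²`, the values `F_a'(1)` have generating function `x²/D²` and
the values `F_a''(1)` have `2x⁴/D³`; the weight `a` is `x d/dx`, and
`x (x d/dx (x²/D²) - 2x⁴/D³) / 2 = x³/D³`. Rather than use bivariate series, the two univariate
identities come directly from the recurrences obeyed by `F_a(1)`, `F_a'(1)`, `F_a''(1)`.
-/

namespace PowerSeries

variable {R : Type*} [CommRing R]

theorem mk_mul_one_sub_X_sub_X_sq {u g : ℕ → R} (h : ∀ a, u (a + 2) = u (a + 1) + u a + g a) :
    mk u * (1 - X - X ^ 2) = C (u 0) + C (u 1 - u 0) * X + X ^ 2 * mk g := by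
  ext (_ | _ | n)
  · simp
  · simp [mul_sub, coeff_mul_X_pow', coeff_X_pow_mul']
  · simp [mul_sub, coeff_mul_X_pow', coeff_X_pow_mul', h]
    ring

theorem coeff_X_mul_derivative (φ : R⟦X⟧) (n : ℕ) :
    coeff n (X * d⁄dX R φ) = n * coeff n φ := by
  rcases n with _ | n
  · simp
  · rw [coeff_succ_X_mul, coeff_derivative, mul_comm]
    push_cast; rfl

theorem mk_eq_X_mul_mk (φ : ℕ → R) :
    mk (fun m => if m = 0 then 0 else φ (m - 1)) = X * mk φ := by
  ext (_ | n) <;> simp [coeff_succ_X_mul]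

theorem mk_mul_one_sub_X_sub_X_sq_eq_one {f : ℕ → R} (h0 : f 0 = 1) (h1 : f 1 = 1)
    (h : ∀ a, f (a + 2) = f (a + 1) + f a) : mk f * (1 - X - X ^ 2) = 1 := by
  have hmk : mk (0 : ℕ → R) = 0 := by ext; simp
  simpa [h0, h1, hmk] using mk_mul_one_sub_X_sub_X_sq (u := f) (g := 0) (by simpa using h)

theorem mk_mul_one_sub_X_sub_X_sq_pow_two {f d : ℕ → R} (hf0 : f 0 = 1) (hf1 : f 1 = 1)
    (hf : ∀ a, f (a + 2) = f (a + 1) + f a) (hd0 : d 0 = 0) (hd1 : d 1 = 0)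
    (hd : ∀ a, d (a + 2) = d (a + 1) + d a + f a) :
    mk d * (1 - X - X ^ 2) ^ 2 = X ^ 2 := by
  have e := mk_mul_one_sub_X_sub_X_sq hd
  simp only [hd0, hd1, sub_self, map_zero, zero_mul, zero_add] at e
  linear_combination (1 - X - X ^ 2) * e + X ^ 2 * mk_mul_one_sub_X_sub_X_sq_eq_one hf0 hf1 hf

theorem mk_mul_one_sub_X_sub_X_sq_pow_three {d s : ℕ → R}
    (hd : mk d * (1 - X - X ^ 2) ^ 2 = X ^ 2) (hs0 : s 0 = 0) (hs1 : s 1 = 0)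
    (hs : ∀ a, s (a + 2) = s (a + 1) + s a + 2 * d a) :
    mk s * (1 - X - X ^ 2) ^ 3 = 2 * X ^ 4 := by
  have e := mk_mul_one_sub_X_sub_X_sq hs
  have hmk : mk (fun a => 2 * d a) = 2 * mk d := by
    ext n
    rw [coeff_mk, ← map_ofNat C 2, coeff_C_mul, coeff_mk]
  simp only [hs0, hs1, sub_self, map_zero, zero_mul, zero_add, hmk] at e
  linear_combination (1 - X - X ^ 2) ^ 2 * e + 2 * X ^ 2 * hd

theorem X_mul_derivative_mul_one_sub_X_sub_X_sq_pow_three {φ : R⟦X⟧}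
    (h : φ * (1 - X - X ^ 2) ^ 2 = X ^ 2) :
    X * d⁄dX R φ * (1 - X - X ^ 2) ^ 3 = 2 * X ^ 2 + 2 * X ^ 4 := by
  have h' := congrArg (d⁄dX R) h
  simp only [Derivation.leibniz, derivative_pow, map_sub, derivative_X, derivative_one,
    smul_eq_mul, Nat.cast_ofNat, Nat.add_one_sub_one, pow_one] at h'
  linear_combination X * (1 - X - X ^ 2) * h' + 2 * X * (1 + 2 * X) * h

theorem mk_eq_X_pow_three_mul_inv {K : Type*} [Field K] {d s : ℕ → K}
    (h2 : (2 : K) ≠ 0) (hd : mk d * (1 - X - X ^ 2) ^ 2 = X ^ 2)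
    (hs : mk s * (1 - X - X ^ 2) ^ 3 = 2 * X ^ 4) :
    mk (fun m : ℕ => if m = 0 then 0 else ((m - 1 : ℕ) : K) / 2 * d (m - 1) - 1 / 2 * s (m - 1))
      = X ^ 3 * ((1 - X - X ^ 2) ^ 3)⁻¹ := by
  have hmk : mk (fun n : ℕ => (n : K) / 2 * d n - 1 / 2 * s n)
      = C (1 / 2) * (X * d⁄dX K (mk d) - mk s) := by
    ext n
    simp only [coeff_mk, coeff_C_mul, map_sub, coeff_X_mul_derivative]
    ring
  have hC : C (1 / 2 : K) * 2 = 1 := by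
    rw [← map_ofNat C 2, ← map_mul, one_div, inv_mul_cancel₀ h2, map_one]
  rw [eq_mul_inv_iff_mul_eq (by simp), mk_eq_X_mul_mk (fun n : ℕ => (n : K) / 2 * d n - 1 / 2 * s n),
    hmk]
  linear_combination X * C (1 / 2 : K) * X_mul_derivative_mul_one_sub_X_sub_X_sq_pow_three hd
    - X * C (1 / 2 : K) * hs + X ^ 3 * hC

end PowerSeries

namespace Polynomial

variable {R : Type*} [CommRing R] {F : ℕ → R[X]}

theorem eval_one_add_two (hrec : ∀ a, F (a + 2) = F (a + 1) + X * F a) (a : ℕ) :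
    (F (a + 2)).eval 1 = (F (a + 1)).eval 1 + (F a).eval 1 := by
  simp [hrec]

theorem eval_one_derivative_add_two (hrec : ∀ a, F (a + 2) = F (a + 1) + X * F a) (a : ℕ) :
    (derivative (F (a + 2))).eval 1
      = (derivative (F (a + 1))).eval 1 + (derivative (F a)).eval 1 + (F a).eval 1 := by
  simp [hrec, derivative_mul]
  ring

theorem eval_one_derivative_derivative_add_two (hrec : ∀ a, F (a + 2) = F (a + 1) + X * F a)
    (a : ℕ) :
    (derivative (derivative (F (a + 2)))).eval 1
      = (derivative (derivative (F (a + 1)))).eval 1 + (derivative (derivative (F a))).eval 1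
        + 2 * (derivative (F a)).eval 1 := by
  simp [hrec, derivative_mul]
  ring

end Polynomial

open PowerSeries in
/-- With `F_0 = F_1 = 1`, `F_a = F_{a-1} + q F_{a-2}` and
`Φ_a = (a/2)F_a'(1) - (1/2)F_a''(1)`, we have
`Σ_{a≥0} Φ_a x^{a+1} = x³/(1-x-x²)³` in `ℚ[[x]]`. -/
theorem total_size_generating_function (F : ℕ → Polynomial ℚ)
    (h0 : F 0 = 1) (h1 : F 1 = 1)
    (hrec : ∀ a : ℕ, F (a + 2) = F (a + 1) + Polynomial.X * F a) :
    (PowerSeries.mk (fun m : ℕ =>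
        if m = 0 then (0 : ℚ)
        else ((m - 1 : ℕ) : ℚ) / 2 * (Polynomial.derivative (F (m - 1))).eval 1
          - 1 / 2 * (Polynomial.derivative (Polynomial.derivative (F (m - 1)))).eval 1) :
      PowerSeries ℚ) =
      PowerSeries.X ^ 3 * ((1 - PowerSeries.X - PowerSeries.X ^ 2) ^ 3)⁻¹ := by
  have hd := mk_mul_one_sub_X_sub_X_sq_pow_two (d := fun a => (Polynomial.derivative (F a)).eval 1)
    (by simp [h0]) (by simp [h1]) (Polynomial.eval_one_add_two hrec) (by simp [h0]) (by simp [h1])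
    (Polynomial.eval_one_derivative_add_two hrec)
  have hs := mk_mul_one_sub_X_sub_X_sq_pow_three hd
    (s := fun a => (Polynomial.derivative (Polynomial.derivative (F a))).eval 1)
    (by simp [h0]) (by simp [h1]) (Polynomial.eval_one_derivative_derivative_add_two hrec)
  exact mk_eq_X_pow_three_mul_inv two_ne_zero hd hs
end

section
/- With F_{a+1} the Fibonacci numbers (F_1 = F_2 = 1), the total sum Φ_a = Σ_{n} binomial(a-n,n)·n(a-(n-1))/2 satisfies Φ_a = Σ_{i+j+k=a+1, i,j,k ≥ 1} F_i·F_j·F_k for all a ≥ 2. -/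
/-!
Sum over the antidiagonal `m + n = a`, so that `C(a - n, n) = C(m, n)`. Pascal's rule
`C(m + 1, n + 1) = C(m, n + 1) + C(m, n)` gives `Φ_{a+2} = Φ_{a+1} + Φ_a + (P_{a+1} + (a + 2) F_{a+1}) / 2`
with `P_a = Σ n C(a - n, n)` and `P_{a+2} = P_{a+1} + P_a + F_{a+1}`, from which the inhomogeneous
term is `H_{a+2}`, `H` the Fibonacci self-convolution. Convolving any sequence `v` with `F` gives a
sequence `w` with `w_{m+2} = w_{m+1} + w_m + v_{m+1}`, so the triple convolution
`G_{a+1} = (F * H)_{a+1}` satisfies the same recurrence as `Φ_a`, with the same values at `a = 0, 1`.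
-/

open Finset

namespace Nat

section Semiring

variable {R : Type*} [Semiring R]

def fibConv (v : ℕ → R) (m : ℕ) : R := ∑ p ∈ antidiagonal m, (fib p.1 : R) * v p.2

theorem fibConv_add_two (v : ℕ → R) (m : ℕ) :
    fibConv v (m + 2) = fibConv v (m + 1) + fibConv v m + v (m + 1) := by
  rw [fibConv, fibConv, fibConv, Finset.Nat.sum_antidiagonal_succ,
    Finset.Nat.sum_antidiagonal_succ, Finset.Nat.sum_antidiagonal_succ]
  simp only [fib_zero, fib_one, fib_add_two, cast_zero, cast_one, cast_add, zero_mul, zero_add,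
    one_mul, add_mul, sum_add_distrib]
  abel

theorem sum_fib_mul_fib_mul_fib_eq_fibConv_fibConv (a : ℕ) :
    ∑ p ∈ (Icc 1 a ×ˢ Icc 1 a ×ˢ Icc 1 a).filter (fun p : ℕ × ℕ × ℕ => p.1 + p.2.1 + p.2.2 = a + 1),
        (fib p.1 * fib p.2.1 * fib p.2.2 : R) =
      fibConv (fibConv fun n => (fib n : R)) (a + 1) := by
  simp only [fibConv, mul_sum]
  rw [sum_sigma']
  -- Triples with a zero entry contribute `F_0 = 0`, which is why the bounds `1 ≤ i, j, k` can go.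
  refine sum_bij_ne_zero (fun p _ _ => ⟨(p.1, p.2.1 + p.2.2), p.2⟩) ?_ ?_ ?_ ?_
  · rintro ⟨x, y, z⟩ hp _
    simp only [mem_filter, mem_product, mem_Icc] at hp
    simp only [mem_sigma, HasAntidiagonal.mem_antidiagonal, and_true]
    omega
  · rintro ⟨x, y, z⟩ _ _ ⟨x', y', z'⟩ _ _ h
    simp only [Sigma.mk.injEq, Prod.mk.injEq, heq_eq_eq] at h
    obtain ⟨⟨rfl, -⟩, rfl, rfl⟩ := h
    rfl
  · rintro ⟨⟨x, r⟩, y, z⟩ hp hne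
    simp only [mem_sigma, HasAntidiagonal.mem_antidiagonal] at hp
    have hx : x ≠ 0 := by rintro rfl; simp at hne
    have hy : y ≠ 0 := by rintro rfl; simp at hne
    have hz : z ≠ 0 := by rintro rfl; simp at hne
    refine ⟨(x, y, z), ?_, ?_, ?_⟩
    · simp only [mem_filter, mem_product, mem_Icc]
      omega
    · simpa [mul_assoc] using hne
    · simp only [Sigma.mk.injEq, Prod.mk.injEq, heq_eq_eq, true_and, and_true]
      exact hp.2
  · intro p _ _
    simp [mul_assoc]

def chooseSum (w : ℕ → ℕ → R) (a : ℕ) : R :=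
  ∑ p ∈ antidiagonal a, (choose p.1 p.2 : R) * w p.1 p.2

theorem chooseSum_add_two (w : ℕ → ℕ → R) (a : ℕ) :
    chooseSum w (a + 2) =
      chooseSum (fun m n => w (m + 1) n) (a + 1) + chooseSum (fun m n => w (m + 1) (n + 1)) a := by
  rw [chooseSum, Finset.Nat.sum_antidiagonal_succ, chooseSum, Finset.Nat.sum_antidiagonal_succ',
    Finset.Nat.sum_antidiagonal_succ']
  simp only [choose_zero_succ, choose_zero_right, choose_succ_succ, cast_zero, cast_one, cast_add,
    zero_mul, one_mul, zero_add, add_mul, sum_add_distrib, chooseSum]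
  abel

theorem chooseSum_one (a : ℕ) : chooseSum (fun _ _ => (1 : R)) a = fib (a + 1) := by
  simp [chooseSum, fib_succ_eq_sum_choose]

theorem chooseSum_eq_sum_range (w : ℕ → ℕ → R) (a : ℕ) :
    chooseSum w a = ∑ n ∈ range (a / 2 + 1), (choose (a - n) n : R) * w (a - n) n := by
  rw [chooseSum, ← Finset.Nat.sum_antidiagonal_swap]
  simp only [Prod.fst_swap, Prod.snd_swap]
  rw [Finset.Nat.sum_antidiagonal_eq_sum_range_succ fun n m => (choose m n : R) * w m n]
  refine (sum_subset (fun n hn => by simp only [mem_range] at hn ⊢; omega) fun n _ hn => ?_).symm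
  simp only [mem_range] at hn
  rw [choose_eq_zero_of_lt (by omega), cast_zero, zero_mul]

theorem chooseSum_snd_add_two (a : ℕ) :
    chooseSum (fun _ n => (n : R)) (a + 2) =
      chooseSum (fun _ n => (n : R)) (a + 1) + chooseSum (fun _ n => (n : R)) a + fib (a + 1) := by
  rw [chooseSum_add_two, ← chooseSum_one, add_assoc]
  congr 1
  simp only [chooseSum, ← sum_add_distrib, cast_add, cast_one, mul_add, mul_one]

end Semiring

theorem chooseSum_snd_add_mul_fib_eq_two_mul_fibConv (a : ℕ) :
    chooseSum (fun _ n => (n : ℚ)) (a + 1) + (a + 2) * fib (a + 1) =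
      2 * fibConv (fun n => (fib n : ℚ)) (a + 2) := by
  induction a using Nat.twoStepInduction with
  | zero => simp [chooseSum, fibConv, Finset.Nat.sum_antidiagonal_succ]
  | one => norm_num [chooseSum, fibConv, Finset.Nat.sum_antidiagonal_succ, fib_add_two]
  | more a ih₁ ih₂ =>
    have hfib : (fib (a + 3) : ℚ) = fib (a + 1) + fib (a + 2) := mod_cast fib_add_two
    rw [chooseSum_snd_add_two, fibConv_add_two]
    push_cast at ih₁ ih₂ ⊢
    linear_combination ih₁ + ih₂ + (a + 2) * hfib

/-- The paper's `Φ_a`, indexed by `(m, n) = (a - n, n)`, so that `a - (n - 1) = m + 1` for `n ≥ 1`. -/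
def totalSize (a : ℕ) : ℚ := chooseSum (fun m n => (n * (m + 1) / 2 : ℚ)) a

theorem totalSize_add_two (a : ℕ) :
    totalSize (a + 2) = totalSize (a + 1) + totalSize a +
      (chooseSum (fun _ n => (n : ℚ)) (a + 1) + (a + 2) * fib (a + 1)) / 2 := by
  have h₁ : chooseSum (fun m n => (n * ((m + 1 : ℕ) + 1) / 2 : ℚ)) (a + 1) =
      totalSize (a + 1) + chooseSum (fun _ n => (n : ℚ)) (a + 1) / 2 := by
    simp only [totalSize, chooseSum, sum_div, ← sum_add_distrib]
    refine sum_congr rfl fun p _ => ?_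
    push_cast
    ring
  have h₂ : chooseSum (fun m n => ((n + 1 : ℕ) * ((m + 1 : ℕ) + 1) / 2 : ℚ)) a =
      totalSize a + (a + 2) / 2 * fib (a + 1) := by
    rw [← chooseSum_one, totalSize, chooseSum, chooseSum, chooseSum, mul_sum, ← sum_add_distrib]
    refine sum_congr rfl fun p hp => ?_
    rw [← mem_antidiagonal.mp hp]
    push_cast
    ring
  rw [totalSize, chooseSum_add_two, h₁, h₂]
  ring

theorem totalSize_eq_fibConv_fibConv (a : ℕ) :
    totalSize a = fibConv (fibConv fun n => (fib n : ℚ)) (a + 1) := by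
  induction a using Nat.twoStepInduction with
  | zero => simp [totalSize, chooseSum, fibConv, Finset.Nat.sum_antidiagonal_succ]
  | one => simp [totalSize, chooseSum, fibConv, Finset.Nat.sum_antidiagonal_succ]
  | more a ih₁ ih₂ =>
    rw [totalSize_add_two, chooseSum_snd_add_mul_fib_eq_two_mul_fibConv, ih₁, ih₂,
      fibConv_add_two (m := a + 1)]
    ring

end Nat

theorem total_size_fibonacci_convolution_general (a : ℕ) :
    (∑ n ∈ Finset.range (a / 2 + 1),
        (Nat.choose (a - n) n : ℚ) * n * ((a - (n - 1) : ℕ) : ℚ) / 2) =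
      ∑ p ∈ (Finset.Icc 1 a ×ˢ Finset.Icc 1 a ×ˢ Finset.Icc 1 a).filter
          (fun p : ℕ × ℕ × ℕ => p.1 + p.2.1 + p.2.2 = a + 1),
        ((Nat.fib p.1 * Nat.fib p.2.1 * Nat.fib p.2.2 : ℕ) : ℚ) := by
  push_cast
  rw [Nat.sum_fib_mul_fib_mul_fib_eq_fibConv_fibConv, ← Nat.totalSize_eq_fibConv_fibConv,
    Nat.totalSize, Nat.chooseSum_eq_sum_range]
  refine sum_congr rfl fun n hn => ?_
  rcases n with _ | n
  · simp
  · have hsub : a - (n + 1 - 1) = a - (n + 1) + 1 := by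
      simp only [mem_range] at hn
      omega
    rw [hsub]
    push_cast
    ring

/-- `Σ_n C(a-n, n)·n(a-(n-1))/2 = Σ_{i+j+k=a+1, i,j,k ≥ 1} F_i F_j F_k`,
with `F` the Fibonacci numbers (`F_1 = F_2 = 1`). -/
theorem total_size_fibonacci_convolution (a : ℕ) (ha : 2 ≤ a) :
    (∑ n ∈ Finset.range (a / 2 + 1),
        (Nat.choose (a - n) n : ℚ) * n * ((a - (n - 1) : ℕ) : ℚ) / 2) =
      ∑ p ∈ (Finset.Icc 1 a ×ˢ Finset.Icc 1 a ×ˢ Finset.Icc 1 a).filter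
          (fun p : ℕ × ℕ × ℕ => p.1 + p.2.1 + p.2.2 = a + 1),
        ((Nat.fib p.1 * Nat.fib p.2.1 * Nat.fib p.2.2 : ℕ) : ℚ) :=
  total_size_fibonacci_convolution_general a
end

section
/- For formal variables q, t and positive integer s, define F̃_a^{(s)}(q,t) = Σ_d q^{Σ_i d(i)} t^{Σ_i i·d(i)}, summed over functions d : {1,...,a-1} → {0,...,s} with sparse support. Then F̃_{a+1}^{(s)}(q,t) = F̃_a^{(s)}(q,t) + q·t^a·(1 + qt^a + ... + (qt^a)^{s-1})·F̃_{a-1}^{(s)}(q,t) for a ≥ 1, with F̃_0 = F̃_1 = 1. -/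
open MvPolynomial in
/-- `F̃_a^{(s)}(q,t) = Σ_d q^{Σ_i d(i)} t^{Σ_i i·d(i)}` (variable `0` is `q`,
variable `1` is `t`; index `i : Fin (a-1)` represents `i+1`). -/
noncomputable def Ftilde (s a : ℕ) : MvPolynomial (Fin 2) ℤ :=
  ∑ d ∈ sparseFuns s a,
    X 0 ^ (∑ i : Fin (a - 1), (d i : ℕ)) * X 1 ^ (∑ i : Fin (a - 1), ((i : ℕ) + 1) * (d i : ℕ))

namespace FtildeAux
open MvPolynomial Finset

def Spar (s n : ℕ) (d : Fin n → Fin (s+1)) : Prop :=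
  ∀ i j : Fin n, 0 < (d i : ℕ) → 0 < (d j : ℕ) → (i : ℕ) + 1 ≠ (j : ℕ)

instance (s n : ℕ) : DecidablePred (Spar s n) := fun _ => by unfold Spar; infer_instance

lemma ftilde_eq (s n : ℕ) :
    Ftilde s (n+1) = ∑ d : Fin n → Fin (s+1),
      if Spar s n d then
        X 0 ^ (∑ i : Fin n, (d i : ℕ)) * X 1 ^ (∑ i : Fin n, ((i:ℕ)+1) * (d i : ℕ)) else 0 := by
  rw [Ftilde, sparseFuns, Finset.sum_filter]
  rfl

lemma spar_snoc_zero (s n : ℕ) (f : Fin n → Fin (s+1)) :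
    Spar s (n+1) (Fin.snoc f 0) ↔ Spar s n f := by
  constructor
  · intro h i j hi hj
    have := h i.castSucc j.castSucc
    simp only [Fin.snoc_castSucc] at this
    simpa using this hi hj
  · intro h i j hi hj
    induction i using Fin.lastCases with
    | last => simp [Fin.snoc_last] at hi
    | cast i =>
      induction j using Fin.lastCases with
      | last => simp [Fin.snoc_last] at hj
      | cast j =>
        simp only [Fin.snoc_castSucc] at hi hj
        simpa using h i j hi hj

lemma spar_snoc (s n : ℕ) (e : Fin (n+1) → Fin (s+1)) (v : Fin (s+1)) :
    Spar s (n+2) (Fin.snoc e v) ↔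
      Spar s (n+1) e ∧ (0 < (v:ℕ) → (e (Fin.last n) : ℕ) = 0) := by
  constructor
  · intro h
    refine ⟨fun i j hi hj => ?_, fun hv => ?_⟩
    · have := h i.castSucc j.castSucc
      simp only [Fin.snoc_castSucc] at this
      simpa using this hi hj
    · by_contra h0
      have hl : 0 < (e (Fin.last n) : ℕ) := Nat.pos_of_ne_zero h0
      have := h (Fin.last n).castSucc (Fin.last (n+1))
      simp only [Fin.snoc_castSucc, Fin.snoc_last, Fin.coe_castSucc, Fin.val_last] at this
      exact this hl hv (by omega)
  · rintro ⟨he, hlast⟩ i j hi hj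
    induction i using Fin.lastCases with
    | last =>
      have : (j : ℕ) < n + 2 := j.isLt
      simp only [Fin.val_last]
      omega
    | cast i =>
      induction j using Fin.lastCases with
      | last =>
        simp only [Fin.snoc_castSucc] at hi
        simp only [Fin.snoc_last] at hj
        have h0 := hlast hj
        intro hc
        simp only [Fin.coe_castSucc, Fin.val_last] at hc
        have : i = Fin.last n := Fin.ext (by simp only [Fin.val_last]; omega)
        rw [this, h0] at hi
        omega
      | cast j =>
        simp only [Fin.snoc_castSucc] at hi hj
        simpa using he i j hi hj

end FtildeAux

namespace FtildeAux
open MvPolynomial Finset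

lemma sum_snoc (s n : ℕ) (g : (Fin (n+1) → Fin (s+1)) → MvPolynomial (Fin 2) ℤ) :
    ∑ d : Fin (n+1) → Fin (s+1), g d
      = ∑ v : Fin (s+1), ∑ e : Fin n → Fin (s+1), g (Fin.snoc e v) := by
  rw [← Equiv.sum_comp (Fin.snocEquiv (fun _ => Fin (s+1))) g, Fintype.sum_prod_type]
  rfl

lemma sum_val_snoc (s n : ℕ) (e : Fin n → Fin (s+1)) (v : Fin (s+1)) :
    ∑ i : Fin (n+1), ((Fin.snoc e v : Fin (n+1) → Fin (s+1)) i : ℕ)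
      = (∑ i : Fin n, (e i : ℕ)) + v := by
  rw [Fin.sum_univ_castSucc]
  simp

lemma sum_wval_snoc (s n : ℕ) (e : Fin n → Fin (s+1)) (v : Fin (s+1)) :
    ∑ i : Fin (n+1), ((i : ℕ) + 1) * ((Fin.snoc e v : Fin (n+1) → Fin (s+1)) i : ℕ)
      = (∑ i : Fin n, ((i : ℕ) + 1) * (e i : ℕ)) + (n+1) * v := by
  rw [Fin.sum_univ_castSucc]
  simp

lemma lemA (s n : ℕ) :
    (∑ e : Fin (n+1) → Fin (s+1),
      if Spar s (n+1) e ∧ (e (Fin.last n) : ℕ) = 0 then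
        X 0 ^ (∑ i : Fin (n+1), (e i : ℕ)) *
          X 1 ^ (∑ i : Fin (n+1), ((i:ℕ)+1) * (e i : ℕ)) else 0)
    = Ftilde s (n+1) := by
  rw [sum_snoc, Fin.sum_univ_succ]
  have hz : ∀ j : Fin s,
      (∑ g : Fin n → Fin (s+1),
        if Spar s (n+1) (Fin.snoc g j.succ) ∧ ((Fin.snoc g j.succ : Fin (n+1) → Fin (s+1)) (Fin.last n) : ℕ) = 0 then
          X 0 ^ (∑ i : Fin (n+1), ((Fin.snoc g j.succ : Fin (n+1) → Fin (s+1)) i : ℕ)) *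
            X 1 ^ (∑ i : Fin (n+1), ((i:ℕ)+1) * ((Fin.snoc g j.succ : Fin (n+1) → Fin (s+1)) i : ℕ)) else 0)
      = (0 : MvPolynomial (Fin 2) ℤ) := by
    intro j
    refine Finset.sum_eq_zero fun g _ => ?_
    simp [Fin.snoc_last]
  rw [Finset.sum_eq_zero (fun j _ => hz j), add_zero, ftilde_eq]
  refine Finset.sum_congr rfl fun g _ => ?_
  rw [sum_val_snoc, sum_wval_snoc]
  simp [spar_snoc_zero, Fin.snoc_last]

lemma lemB (s n k : ℕ) (v : Fin (s+1)) (hv : (v : ℕ) = k + 1) :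
    (∑ e : Fin (n+1) → Fin (s+1),
      if Spar s (n+2) (Fin.snoc e v) then
        X 0 ^ (∑ i : Fin (n+2), ((Fin.snoc e v : Fin (n+2) → Fin (s+1)) i : ℕ)) *
          X 1 ^ (∑ i : Fin (n+2), ((i:ℕ)+1) * ((Fin.snoc e v : Fin (n+2) → Fin (s+1)) i : ℕ)) else 0)
    = (X 0 ^ (k+1) * X 1 ^ ((n+2)*(k+1))) * Ftilde s (n+1) := by
  rw [← lemA s n, Finset.mul_sum]
  refine Finset.sum_congr rfl fun e _ => ?_
  have hcond : (Spar s (n+1) e ∧ (0 < k + 1 → (e (Fin.last n) : ℕ) = 0))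
      ↔ (Spar s (n+1) e ∧ (e (Fin.last n) : ℕ) = 0) := by
    constructor
    · rintro ⟨h1, h2⟩; exact ⟨h1, h2 (by omega)⟩
    · rintro ⟨h1, h2⟩; exact ⟨h1, fun _ => h2⟩
  simp only [spar_snoc, hcond, sum_val_snoc, sum_wval_snoc, hv, mul_ite, mul_zero]
  by_cases h : Spar s (n+1) e ∧ (e (Fin.last n) : ℕ) = 0
  · rw [if_pos h, if_pos h, pow_add, pow_add]
    ring
  · rw [if_neg h, if_neg h]

end FtildeAux

namespace FtildeAux
open MvPolynomial Finset

lemma base0 (s : ℕ) : Ftilde s 0 = 1 := by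
  rw [Ftilde, sparseFuns, Finset.filter_true_of_mem (fun d _ i j => i.elim0)]
  simp

lemma base1 (s : ℕ) : Ftilde s 1 = 1 := by
  rw [Ftilde, sparseFuns, Finset.filter_true_of_mem (fun d _ i j => i.elim0)]
  simp

lemma main (s n : ℕ) :
    Ftilde s (n+3) = Ftilde s (n+2) +
      (X 0 * X 1 ^ (n+2)) * (∑ k ∈ Finset.range s, (X 0 * X 1 ^ (n+2)) ^ k) * Ftilde s (n+1) := by
  have hrhs : (X 0 * X 1 ^ (n+2)) * (∑ k ∈ Finset.range s, (X 0 * X 1 ^ (n+2)) ^ k) * Ftilde s (n+1)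
      = ∑ k : Fin s, (X 0 ^ ((k:ℕ)+1) * X 1 ^ ((n+2)*((k:ℕ)+1))) * Ftilde s (n+1) := by
    rw [Fin.sum_univ_eq_sum_range
      (fun k => (X 0 ^ (k+1) * X 1 ^ ((n+2)*(k+1))) * Ftilde s (n+1)),
      Finset.mul_sum, Finset.sum_mul]
    refine Finset.sum_congr rfl fun k _ => ?_
    rw [pow_mul]
    ring
  rw [hrhs, ftilde_eq s (n+2), sum_snoc, Fin.sum_univ_succ]
  congr 1
  · rw [ftilde_eq s (n+1)]
    refine Finset.sum_congr rfl fun e _ => ?_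
    have hc : Spar s (n+2) (Fin.snoc e 0) ↔ Spar s (n+1) e := spar_snoc_zero s (n+1) e
    rw [sum_val_snoc, sum_wval_snoc]
    simp [hc]
  · refine Finset.sum_congr rfl fun k _ => ?_
    exact lemB s n k k.succ (by simp)

lemma main1 (s : ℕ) :
    Ftilde s 2 = Ftilde s 1 +
      (X 0 * X 1 ^ 1) * (∑ k ∈ Finset.range s, (X 0 * X 1 ^ 1) ^ k) * Ftilde s 0 := by
  have hall : ∀ d : Fin 1 → Fin (s+1), Spar s 1 d := by
    intro d i j _ _
    omega
  have hrhs : (X 0 * X 1 ^ 1) * (∑ k ∈ Finset.range s, (X 0 * X 1 ^ 1) ^ k) * Ftilde s 0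
      = ∑ k : Fin s, X 0 ^ ((k:ℕ)+1) * X 1 ^ ((k:ℕ)+1) := by
    rw [base0, mul_one,
      Fin.sum_univ_eq_sum_range (fun k => X 0 ^ (k+1) * X 1 ^ (k+1)), Finset.mul_sum]
    refine Finset.sum_congr rfl fun k _ => ?_
    rw [pow_one]
    ring
  rw [hrhs, base1, ftilde_eq s 1, sum_snoc, Fin.sum_univ_succ]
  have hsnoc : ∀ (e : Fin 0 → Fin (s+1)) (v : Fin (s+1)),
      (Fin.snoc e v : Fin 1 → Fin (s+1)) 0 = v := by intro e v; rw [show (0:Fin 1) = Fin.last 0 from rfl, Fin.snoc_last]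
  congr 1
  · simp [hall, hsnoc]
  · refine Finset.sum_congr rfl fun k _ => ?_
    simp [hall, hsnoc, Fin.sum_univ_one]

end FtildeAux


open MvPolynomial in
/-- `F̃_{a+1} = F̃_a + q t^a (1 + qt^a + ... + (qt^a)^{s-1}) F̃_{a-1}` for
`a ≥ 1`, with `F̃_0 = F̃_1 = 1`. -/
theorem Ftilde_recurrence (s : ℕ) (hs : 0 < s) :
    Ftilde s 0 = 1 ∧ Ftilde s 1 = 1 ∧
      ∀ a : ℕ, 1 ≤ a →
        Ftilde s (a + 1) = Ftilde s a +
          (X 0 * X 1 ^ a) * (∑ k ∈ Finset.range s, (X 0 * X 1 ^ a) ^ k) *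
            Ftilde s (a - 1) := by
  refine ⟨FtildeAux.base0 s, FtildeAux.base1 s, ?_⟩
  intro a ha
  match a, ha with
  | 1, _ => exact FtildeAux.main1 s
  | (n+2), _ => exact FtildeAux.main s n
end

section
/- With F̃_a^{(s)}(q,t) = Σ_d q^{Σ_i d(i)} t^{Σ_i i·d(i)} summed over d : {1,...,a-1} → {0,...,s} with sparse support, we have F̃_{a+1}^{(s)}(q,t) = F̃_a^{(s)}(qt, t) + qt·(1 + qt + ... + (qt)^{s-1})·F̃_{a-1}^{(s)}(qt^2, t) for a ≥ 1. -/
/-!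
Split a sparse `d` by its first value `v = d 0` and its tail `e`. Shifting the tail one place
to the left adds one factor of `t` per unit of its mass, so `d` contributes `(qt)^v` times the
monomial of `e` at `(qt, t)`. For `v = 0` the tail is an arbitrary sparse function, giving
`F̃_a(qt, t)`; for `v > 0` sparsity forces `e 0 = 0`, and dropping that zero shifts once more,
giving `(qt)^v F̃_{a-1}(qt², t)`.
-/

open Finset

theorem Fin.sum_univ_fun_cons {α M : Type*} [Fintype α] [AddCommMonoid M] {n : ℕ}
    (f : (Fin (n + 1) → α) → M) : ∑ d, f d = ∑ v, ∑ e, f (Fin.cons v e) := by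
  rw [← Fintype.sum_prod_type', ← Fintype.sum_equiv (Fin.consEquiv fun _ => α) _ f fun _ => rfl]
  rfl

section Sparse

variable {s n : ℕ}

def IsSparse (d : Fin n → Fin (s + 1)) : Prop :=
  ∀ i j : Fin n, 0 < (d i : ℕ) → 0 < (d j : ℕ) → (i : ℕ) + 1 ≠ (j : ℕ)

instance : DecidablePred (IsSparse (s := s) (n := n)) :=
  fun _ => by unfold IsSparse; infer_instance

theorem isSparse_cons_zero {e : Fin n → Fin (s + 1)} :
    IsSparse (Fin.cons 0 e : Fin (n + 1) → Fin (s + 1)) ↔ IsSparse e := by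
  constructor
  · intro h i j hi hj
    simpa using h i.succ j.succ (by simpa using hi) (by simpa using hj)
  · intro h i j hi hj
    cases i using Fin.cases with
    | zero => simp at hi
    | succ i =>
      cases j using Fin.cases with
      | zero => simp
      | succ j => simpa using h i j (by simpa using hi) (by simpa using hj)

theorem isSparse_cons {v : Fin (s + 1)} {e : Fin (n + 1) → Fin (s + 1)} :
    IsSparse (Fin.cons v e) ↔ IsSparse e ∧ (v ≠ 0 → e 0 = 0) := by
  constructor
  · intro h
    refine ⟨fun i j hi hj => ?_, fun hv => ?_⟩
    · simpa using h i.succ j.succ (by simpa using hi) (by simpa using hj)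
    · by_contra he
      exact h 0 1 (by simpa [Fin.pos_iff_ne_zero] using hv)
        (by simpa [Fin.pos_iff_ne_zero] using he) rfl
  · rintro ⟨h, hv⟩ i j hi hj
    cases i using Fin.cases with
    | zero =>
      cases j using Fin.cases with
      | zero => simp
      | succ j =>
        cases j using Fin.cases with
        | zero => simp_all [Fin.pos_iff_ne_zero]
        | succ j => simp
    | succ i =>
      cases j using Fin.cases with
      | zero => simp
      | succ j => simpa using h i j (by simpa using hi) (by simpa using hj)

variable {R : Type*} [CommSemiring R]

def qtMonomial (q t : R) (d : Fin n → Fin (s + 1)) : R :=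
  q ^ (∑ i : Fin n, (d i : ℕ)) * t ^ (∑ i : Fin n, ((i : ℕ) + 1) * (d i : ℕ))

theorem qtMonomial_cons (q t : R) (v : Fin (s + 1)) (e : Fin n → Fin (s + 1)) :
    qtMonomial q t (Fin.cons v e) = (q * t) ^ (v : ℕ) * qtMonomial (q * t) t e := by
  simp only [qtMonomial, Fin.sum_univ_succ, Fin.cons_zero, Fin.cons_succ, Fin.val_zero,
    Fin.val_succ]
  have hweight : ∑ i : Fin n, ((i : ℕ) + 1 + 1) * (e i : ℕ) =
      ∑ i : Fin n, (e i : ℕ) + ∑ i : Fin n, ((i : ℕ) + 1) * (e i : ℕ) := by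
    rw [← sum_add_distrib]
    exact sum_congr rfl fun i _ => by ring
  rw [hweight]
  ring

variable (s n) in
def sparseSum (q t : R) : R :=
  ∑ d : Fin n → Fin (s + 1) with IsSparse d, qtMonomial q t d

open MvPolynomial in
theorem Ftilde_eq_sparseSum (s a : ℕ) : Ftilde s a = sparseSum s (a - 1) (X 0) (X 1) := by
  unfold Ftilde sparseSum sparseFuns
  rfl

theorem map_sparseSum {S F : Type*} [CommSemiring S] [FunLike F R S] [RingHomClass F R S]
    (f : F) (q t : R) : f (sparseSum s n q t) = sparseSum s n (f q) (f t) := by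
  simp [sparseSum, qtMonomial, map_sum]

theorem sparseSum_zero (q t : R) : sparseSum s 0 q t = 1 := by
  simp [sparseSum, IsSparse, qtMonomial]

theorem sparseSum_one (q t : R) :
    sparseSum s 1 q t = 1 + q * t * ∑ k ∈ range s, (q * t) ^ k := by
  have hall : ∀ d : Fin 1 → Fin (s + 1), IsSparse d := fun d i j _ _ => by
    rw [Fin.val_eq_zero i, Fin.val_eq_zero j]
    exact one_ne_zero
  rw [sparseSum, filter_true_of_mem fun d _ => hall d, Fin.sum_univ_fun_cons, Fin.sum_univ_succ]
  simp only [qtMonomial_cons, Fin.val_zero, Fin.val_succ, pow_succ']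
  simp [qtMonomial, ← mul_sum, Fin.sum_univ_eq_sum_range (fun k => (q * t) ^ k)]

theorem sum_isSparse_head_eq_zero (q t : R) :
    ∑ e : Fin (n + 1) → Fin (s + 1), (if IsSparse e ∧ e 0 = 0 then qtMonomial q t e else 0) =
      sparseSum s n (q * t) t := by
  rw [Fin.sum_univ_fun_cons, Fin.sum_univ_succ, sparseSum, sum_filter]
  simp [isSparse_cons_zero, qtMonomial_cons, Fin.succ_ne_zero]

theorem sparseSum_add_two (q t : R) :
    sparseSum s (n + 2) q t =
      sparseSum s (n + 1) (q * t) t +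
        q * t * (∑ k ∈ range s, (q * t) ^ k) * sparseSum s n (q * t ^ 2) t := by
  rw [show q * t ^ 2 = q * t * t by ring, ← sum_isSparse_head_eq_zero (q * t) t, sparseSum,
    sum_filter, Fin.sum_univ_fun_cons, Fin.sum_univ_succ, sparseSum, sum_filter]
  simp only [isSparse_cons, qtMonomial_cons, ne_eq, not_true_eq_false, false_imp_iff, and_true,
    Fin.val_zero, pow_zero, one_mul, Fin.succ_ne_zero, not_false_eq_true, forall_const,
    Fin.val_succ, ← mul_ite_zero, ← mul_sum, ← sum_mul, pow_succ']
  rw [Fin.sum_univ_eq_sum_range (fun k => (q * t) ^ k)]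

-- At `n = 0` the truncated `n - 1` is `0`, and `sparseSum s 0 = 1` plays the role of `F̃_0 = 1`.
theorem sparseSum_succ (q t : R) :
    sparseSum s (n + 1) q t =
      sparseSum s n (q * t) t +
        q * t * (∑ k ∈ range s, (q * t) ^ k) * sparseSum s (n - 1) (q * t ^ 2) t := by
  cases n with
  | zero => rw [sparseSum_one, sparseSum_zero, sparseSum_zero, mul_one]
  | succ n => exact sparseSum_add_two q t

end Sparse

open MvPolynomial in
theorem Ftilde_recurrence_substituted_general (s : ℕ) (a : ℕ) (ha : 1 ≤ a) :
    Ftilde s (a + 1) =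
      (bind₁ (fun j : Fin 2 => if j = 0 then X 0 * X 1 else X 1)) (Ftilde s a) +
        (X 0 * X 1) * (∑ k ∈ Finset.range s, (X 0 * X 1) ^ k) *
          (bind₁ (fun j : Fin 2 => if j = 0 then X 0 * X 1 ^ 2 else X 1)) (Ftilde s (a - 1)) := by
  obtain ⟨n, rfl⟩ := Nat.exists_eq_add_of_le' ha
  simp only [Ftilde_eq_sparseSum, map_sparseSum, Nat.add_sub_cancel]
  rw [sparseSum_succ]
  simp

open MvPolynomial in
/-- `F̃_{a+1}(q,t) = F̃_a(qt,t) + qt(1 + qt + ... + (qt)^{s-1}) F̃_{a-1}(qt²,t)`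
for `a ≥ 1`. -/
theorem Ftilde_recurrence_substituted (s : ℕ) (hs : 0 < s) (a : ℕ) (ha : 1 ≤ a) :
    Ftilde s (a + 1) =
      (bind₁ (fun j : Fin 2 => if j = 0 then X 0 * X 1 else X 1)) (Ftilde s a) +
        (X 0 * X 1) * (∑ k ∈ Finset.range s, (X 0 * X 1) ^ k) *
          (bind₁ (fun j : Fin 2 => if j = 0 then X 0 * X 1 ^ 2 else X 1)) (Ftilde s (a - 1)) :=
  Ftilde_recurrence_substituted_general s a ha
end

section
/- The bivariate polynomials F̃_a^{(s)}(q,t) = Σ_d q^{Σ_i d(i)} t^{Σ_i i·d(i)}, summed over d : {1,...,a-1} → {0,...,s} with sparse support, satisfy the symmetry F̃_a^{(s)}(q,t) = (the polynomial obtained from F̃_a^{(s)} by substituting q ↦ q·t^a and t ↦ t^{-1}), i.e. Σ_d q^{Σ d(i)} t^{Σ i·d(i)} = Σ_d q^{Σ d(i)} t^{Σ (a-i)·d(i)}. -/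
lemma mem_sparseFuns_rev {s a : ℕ} {d : Fin (a - 1) → Fin (s + 1)}
    (hd : d ∈ sparseFuns s a) : (fun i => d (Fin.rev i)) ∈ sparseFuns s a := by
  simp only [sparseFuns, Finset.mem_filter, Finset.mem_univ, true_and] at hd ⊢
  intro i j hi hj
  have := hd (Fin.rev j) (Fin.rev i) hj hi
  have h1 : (Fin.rev i : ℕ) = a - 1 - ((i : ℕ) + 1) := Fin.val_rev i
  have h2 : (Fin.rev j : ℕ) = a - 1 - ((j : ℕ) + 1) := Fin.val_rev j
  have hi' := i.isLt
  have hj' := j.isLt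
  omega

open MvPolynomial in
/-- Symmetry `Σ_d q^{Σ d(i)} t^{Σ i·d(i)} = Σ_d q^{Σ d(i)} t^{Σ (a-i)·d(i)}`,
coming from the bijection `i ↦ a - i` on `{1,...,a-1}`. -/
theorem Ftilde_symmetry (s a : ℕ) :
    (∑ d ∈ sparseFuns s a,
        (X 0 : MvPolynomial (Fin 2) ℤ) ^ (∑ i : Fin (a - 1), (d i : ℕ)) *
          X 1 ^ (∑ i : Fin (a - 1), ((i : ℕ) + 1) * (d i : ℕ))) =
      ∑ d ∈ sparseFuns s a,
        (X 0 : MvPolynomial (Fin 2) ℤ) ^ (∑ i : Fin (a - 1), (d i : ℕ)) *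
          X 1 ^ (∑ i : Fin (a - 1), (a - ((i : ℕ) + 1)) * (d i : ℕ)) := by
  refine Finset.sum_nbij' (fun d => fun i => d (Fin.rev i))
    (fun d => fun i => d (Fin.rev i))
    (fun d hd => mem_sparseFuns_rev hd) (fun d hd => mem_sparseFuns_rev hd)
    (fun d _ => by funext i; simp [Fin.rev_rev]) (fun d _ => by funext i; simp [Fin.rev_rev])
    (fun d hd => ?_)
  congr 1
  · congr 1
    exact (Fintype.sum_equiv Fin.revPerm _ _ (fun i => rfl)).symm
  · congr 1
    refine (Fintype.sum_equiv Fin.revPerm _ _ (fun i => ?_)).symm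
    have h1 : (Fin.rev i : ℕ) = a - 1 - ((i : ℕ) + 1) := Fin.val_rev i
    have hi := i.isLt
    simp only [Fin.revPerm_apply, Fin.rev_rev]
    congr 1
    omega
end
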